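/- arXiv:2501.09452 — 3 statements merged into one kernel-verified Lean document; each statement's English description precedes it below -/
import Mathlib

section
/- Let T > 0 and hmin < hmax be real numbers. Let F : ℝ × ℝ × ℝ → ℝ (arguments t, x, u) and g : ℝ × ℝ → ℝ (arguments t, x) be continuously differentiable. Let x* : ℝ → ℝ be a continuous state trajectory and u* : ℝ → ℝ a control with hmin ≤ u*(t) ≤ hmax on [0, T]. Write a(t) = ∂g/∂x(t, x*(t)) and b(t) = ∂F/∂x(t, x*(t), u*(t)), assume a, b, and t ↦ ∂F/∂u(t, x*(t), u*(t)) are continuous on [0, T], set A(t) = ∫₀ᵗ a(v) dv, and define the coordination function 𝔽(t) = ∂F/∂u(t, x*(t), u*(t))·exp(A(t)) + ∫₀ᵗ b(v)·exp(A(v)) dv. Suppose there exists a differentiable costate λ : ℝ → ℝ satisfying λ'(t) = −b(t) − a(t)·λ(t) on [0, T] and such that for every t ∈ [0, T], u*(t) maximizes u ↦ F(t, x*(t), u) + λ(t)·(g(t, x*(t)) − u) over [hmin, hmax]. Then the constant K = λ(0) satisfies, for every t ∈ [0, T]: if hmin < u*(t) < hmax then 𝔽(t) = K; if u*(t) = hmin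 then 𝔽(t) ≤ K; and if u*(t) = hmax then 𝔽(t) ≥ K. -/
/-!
Multiplying the adjoint equation `λ' = -b - a λ` by the integrating factor `exp A` shows that
`λ(t) exp A(t) + ∫₀ᵗ b exp A` is constant, equal to `λ(0) = K`. Hence
`𝔽(t) - K = (∂F/∂u - λ(t)) exp A(t)`, and `∂F/∂u - λ(t)` is the derivative in `u` of the
Hamiltonian, which is maximised over `[hmin, hmax]` at `u*(t)`: it vanishes at an interior
maximiser, is `≤ 0` at a maximiser `hmin` and `≥ 0` at a maximiser `hmax`.
-/

open Set MeasureTheory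

theorem ContinuousOn.hasDerivAt_integral_of_mem_Ioo {E : Type*} [NormedAddCommGroup E]
    [NormedSpace ℝ E] [CompleteSpace E] {f : ℝ → E} {a b x : ℝ}
    (hf : ContinuousOn f (Icc a b)) (hx : x ∈ Ioo a b) :
    HasDerivAt (fun t => ∫ v in a..t, f v) (f x) x :=
  intervalIntegral.integral_hasDerivAt_right
    ((hf.mono (Icc_subset_Icc le_rfl hx.2.le)).intervalIntegrable_of_Icc hx.1.le)
    ((hf.mono Ioo_subset_Icc_self).stronglyMeasurableAtFilter isOpen_Ioo x hx)
    (hf.continuousAt (Icc_mem_nhds hx.1 hx.2))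

theorem ContinuousOn.continuousOn_integral_Icc {E : Type*} [NormedAddCommGroup E]
    [NormedSpace ℝ E] [CompleteSpace E] {f : ℝ → E} {a b : ℝ}
    (hf : ContinuousOn f (Icc a b)) (hab : a ≤ b) :
    ContinuousOn (fun t => ∫ v in a..t, f v) (Icc a b) := by
  have := intervalIntegral.continuousOn_primitive_interval (μ := volume)
    (hf.integrableOn_Icc.mono_set (uIcc_of_le hab).subset)
  rwa [uIcc_of_le hab] at this

theorem mul_exp_integral_add_integral_eq_of_hasDerivAt {a b l : ℝ → ℝ} {t₀ t₁ : ℝ}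
    (h : t₀ ≤ t₁) (ha : ContinuousOn a (Icc t₀ t₁)) (hb : ContinuousOn b (Icc t₀ t₁))
    (hl : ∀ t ∈ Icc t₀ t₁, HasDerivAt l (-b t - a t * l t) t) :
    l t₁ * Real.exp (∫ v in t₀..t₁, a v) + ∫ v in t₀..t₁, b v * Real.exp (∫ w in t₀..v, a w)
      = l t₀ := by
  set A : ℝ → ℝ := fun t => ∫ v in t₀..t, a v
  have hA : ContinuousOn A (Icc t₀ t₁) := ha.continuousOn_integral_Icc h
  have hbA : ContinuousOn (fun t => b t * Real.exp (A t)) (Icc t₀ t₁) :=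
    hb.mul (Real.continuous_exp.comp_continuousOn hA)
  have hcont : ContinuousOn (fun t => l t * Real.exp (A t)) (Icc t₀ t₁) :=
    ContinuousOn.mul (fun t ht => (hl t ht).continuousAt.continuousWithinAt)
      (Real.continuous_exp.comp_continuousOn hA)
  have hderiv : ∀ t ∈ Ioo t₀ t₁,
      HasDerivAt (fun t => l t * Real.exp (A t)) (-(b t * Real.exp (A t))) t := by
    intro t ht
    refine ((hl t (Ioo_subset_Icc_self ht)).mul
      (ha.hasDerivAt_integral_of_mem_Ioo ht).exp).congr_deriv ?_
    ring
  have hFTC := intervalIntegral.integral_eq_sub_of_hasDerivAt_of_le h hcont hderiv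
    (hbA.intervalIntegrable_of_Icc h).neg
  simp only [intervalIntegral.integral_neg, A, intervalIntegral.integral_same, Real.exp_zero,
    mul_one] at hFTC
  linarith

theorem IsMaxOn.hasDerivAt_mul_sub_nonpos {φ : ℝ → ℝ} {s : Set ℝ} {u v d : ℝ}
    (hmax : IsMaxOn φ s u) (hd : HasDerivAt φ d u) (hs : Convex ℝ s) (hu : u ∈ s) (hv : v ∈ s) :
    d * (v - u) ≤ 0 := by
  have hcone : v - u ∈ posTangentConeAt s u :=
    sub_mem_posTangentConeAt_of_segment_subset (hs.segment_subset hu hv)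
  have := hmax.localize.hasFDerivWithinAt_nonpos
    hd.hasFDerivAt.hasFDerivWithinAt hcone
  simpa [mul_comm] using this

theorem IsMaxOn.hasDerivAt_sign_Icc {φ : ℝ → ℝ} {lo hi u d : ℝ} (hlt : lo < hi)
    (hmax : IsMaxOn φ (Icc lo hi) u) (hd : HasDerivAt φ d u) :
    ((lo < u ∧ u < hi) → d = 0) ∧ (u = lo → d ≤ 0) ∧ (u = hi → 0 ≤ d) := by
  refine ⟨fun ⟨hlo, hhi⟩ => (hmax.isLocalMax (Icc_mem_nhds hlo hhi)).hasDerivAt_eq_zero hd,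
    fun hu => ?_, fun hu => ?_⟩
  · subst hu
    have := hmax.hasDerivAt_mul_sub_nonpos hd (convex_Icc _ _) (left_mem_Icc.2 hlt.le)
      (right_mem_Icc.2 hlt.le)
    nlinarith
  · subst hu
    have := hmax.hasDerivAt_mul_sub_nonpos hd (convex_Icc _ _) (right_mem_Icc.2 hlt.le)
      (left_mem_Icc.2 hlt.le)
    nlinarith

theorem coordination_necessary_maximum_condition_general
    (T hmin hmax : ℝ) (hlt : hmin < hmax)
    (F : ℝ → ℝ → ℝ → ℝ) (g : ℝ → ℝ → ℝ)
    (xstar ustar : ℝ → ℝ)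
    (a b p : ℝ → ℝ)
    (hpFu : ∀ t ∈ Set.Icc (0:ℝ) T, HasDerivAt (fun u => F t (xstar t) u) (p t) (ustar t))
    (haC : ContinuousOn a (Set.Icc 0 T))
    (hbC : ContinuousOn b (Set.Icc 0 T))
    (A 𝔽 : ℝ → ℝ)
    (hA : ∀ t, A t = ∫ v in (0:ℝ)..t, a v)
    (h𝔽 : ∀ t, 𝔽 t = p t * Real.exp (A t) + ∫ v in (0:ℝ)..t, b v * Real.exp (A v))
    (l : ℝ → ℝ)
    (hld : ∀ t ∈ Set.Icc (0:ℝ) T, HasDerivAt l (-b t - a t * l t) t)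
    (hmaxH : ∀ t ∈ Set.Icc (0:ℝ) T, ∀ u ∈ Set.Icc hmin hmax,
      F t (xstar t) u + l t * (g t (xstar t) - u) ≤
        F t (xstar t) (ustar t) + l t * (g t (xstar t) - ustar t))
    (K : ℝ) (hK : K = l 0) :
    ∀ t ∈ Set.Icc (0:ℝ) T,
      ((hmin < ustar t ∧ ustar t < hmax) → 𝔽 t = K) ∧
      (ustar t = hmin → 𝔽 t ≤ K) ∧
      (ustar t = hmax → K ≤ 𝔽 t) := by
  intro t ht
  have hsub : Icc 0 t ⊆ Icc 0 T := Icc_subset_Icc le_rfl ht.2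
  have hconst := mul_exp_integral_add_integral_eq_of_hasDerivAt ht.1 (haC.mono hsub)
    (hbC.mono hsub) fun s hs => hld s (hsub hs)
  have hgap : 𝔽 t - K = (p t - l t) * Real.exp (A t) := by
    simp only [h𝔽, hK, ← hconst, hA]
    ring
  have hH : HasDerivAt (fun u => F t (xstar t) u + l t * (g t (xstar t) - u))
      (p t - l t) (ustar t) := by
    have := (hpFu t ht).add (((hasDerivAt_id' (ustar t)).const_sub (g t (xstar t))).const_mul (l t))
    rwa [mul_neg_one, ← sub_eq_add_neg] at this
  obtain ⟨hinterior, hleft, hright⟩ := IsMaxOn.hasDerivAt_sign_Icc hlt (hmaxH t ht) hH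
  have hexp := Real.exp_pos (A t)
  exact ⟨fun h => by nlinarith [hinterior h], fun h => by nlinarith [hleft h],
    fun h => by nlinarith [hright h]⟩

/-- Theorem 1 of the paper (necessary maximum condition): along an optimal
pair `(x*, u*)` for the problem `max ∫₀ᵀ F(t,x,u) dt` subject to
`ẋ = g(t,x) − u`, `u(t) ∈ [hmin, hmax]`, with costate `λ` satisfying the
adjoint equation and pointwise Hamiltonian maximization, the constant
`K = λ(0)` and the coordination function `𝔽` satisfy: `𝔽(t) = K` whenever
`u*(t)` is interior, `𝔽(t) ≤ K` when `u*(t) = hmin`, and `𝔽(t) ≥ K` when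
`u*(t) = hmax`. -/
theorem coordination_necessary_maximum_condition
    (T hmin hmax : ℝ) (hT : 0 < T) (hlt : hmin < hmax)
    (F : ℝ → ℝ → ℝ → ℝ) (g : ℝ → ℝ → ℝ)
    (hF : ContDiff ℝ 1 (fun q : ℝ × ℝ × ℝ => F q.1 q.2.1 q.2.2))
    (hg : ContDiff ℝ 1 (fun q : ℝ × ℝ => g q.1 q.2))
    (xstar ustar : ℝ → ℝ) (hx : Continuous xstar)
    (hu : ∀ t ∈ Set.Icc (0:ℝ) T, ustar t ∈ Set.Icc hmin hmax)
    (a b p : ℝ → ℝ)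
    (hagx : ∀ t ∈ Set.Icc (0:ℝ) T, HasDerivAt (fun x => g t x) (a t) (xstar t))
    (hbFx : ∀ t ∈ Set.Icc (0:ℝ) T, HasDerivAt (fun x => F t x (ustar t)) (b t) (xstar t))
    (hpFu : ∀ t ∈ Set.Icc (0:ℝ) T, HasDerivAt (fun u => F t (xstar t) u) (p t) (ustar t))
    (haC : ContinuousOn a (Set.Icc 0 T))
    (hbC : ContinuousOn b (Set.Icc 0 T))
    (hpC : ContinuousOn p (Set.Icc 0 T))
    (A 𝔽 : ℝ → ℝ)
    (hA : ∀ t, A t = ∫ v in (0:ℝ)..t, a v)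
    (h𝔽 : ∀ t, 𝔽 t = p t * Real.exp (A t) + ∫ v in (0:ℝ)..t, b v * Real.exp (A v))
    (l : ℝ → ℝ)
    (hld : ∀ t ∈ Set.Icc (0:ℝ) T, HasDerivAt l (-b t - a t * l t) t)
    (hmaxH : ∀ t ∈ Set.Icc (0:ℝ) T, ∀ u ∈ Set.Icc hmin hmax,
      F t (xstar t) u + l t * (g t (xstar t) - u) ≤
        F t (xstar t) (ustar t) + l t * (g t (xstar t) - ustar t))
    (K : ℝ) (hK : K = l 0) :
    ∀ t ∈ Set.Icc (0:ℝ) T,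
      ((hmin < ustar t ∧ ustar t < hmax) → 𝔽 t = K) ∧
      (ustar t = hmin → 𝔽 t ≤ K) ∧
      (ustar t = hmax → K ≤ 𝔽 t) :=
  coordination_necessary_maximum_condition_general T hmin hmax hlt F g xstar ustar a b p hpFu haC
    hbC A 𝔽 hA h𝔽 l hld hmaxH K hK
end

section
/- Under the setup of Theorem 1 (T > 0; hmin < hmax; F, g continuously differentiable; x* continuous; a(t) = ∂g/∂x(t, x*(t)), b(t) = ∂F/∂x(t, x*(t), u*(t)) and t ↦ ∂F/∂u(t, x*(t), u*(t)) continuous on [0, T]; coordination function 𝔽(t) = ∂F/∂u(t, x*(t), u*(t))·exp(A(t)) + ∫₀ᵗ b(v)·exp(A(v)) dv with A(t) = ∫₀ᵗ a(v) dv; costate λ differentiable with λ'(t) = −b(t) − a(t)·λ(t) on [0, T] and λ(0) = K): if at some t₀ ∈ [0, T] the control value u*(t₀) lies in the open interval (hmin, hmax) and maximizes u ↦ F(t₀, x*(t₀), u) + λ(t₀)·(g(t₀, x*(t₀)) − u) over [hmin, hmax], then 𝔽(t₀) = K. -/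
/-!
At an interior maximiser of the Hamiltonian `u ↦ F(t₀, x*(t₀), u) + λ(t₀)(g(t₀, x*(t₀)) − u)`
the `u`-derivative vanishes, so `∂F/∂u(t₀, x*(t₀), u*(t₀)) = λ(t₀)`. With the integrating
factor `exp A`, the costate equation `λ' = −b − aλ` says exactly that
`λ(t) exp A(t) + ∫₀ᵗ b exp A` has derivative zero, so this quantity equals its value `λ(0) = K`
at `t = 0`; at `t = t₀` it is `𝔽(t₀)`.
-/

open Set

theorem HasDerivAt.eq_of_isMaxOn_Icc_add_mul_sub {f : ℝ → ℝ} {f' c d x lo hi : ℝ}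
    (hf : HasDerivAt f f' x) (hx : x ∈ Ioo lo hi)
    (hmax : IsMaxOn (fun u => f u + c * (d - u)) (Icc lo hi) x) : f' = c := by
  have hderiv : HasDerivAt (fun u => f u + c * (d - u)) (f' + c * (0 - 1)) x :=
    hf.add (((hasDerivAt_const x d).sub (hasDerivAt_id x)).const_mul c)
  have hlocal := hmax.isLocalMax (Icc_mem_nhds hx.1 hx.2)
  linarith [hlocal.hasDerivAt_eq_zero hderiv]

theorem ContinuousOn.exists_continuous_eqOn_Icc {f : ℝ → ℝ} {lo hi : ℝ} (hlohi : lo ≤ hi)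
    (hf : ContinuousOn f (Icc lo hi)) : ∃ f₀ : ℝ → ℝ, Continuous f₀ ∧ EqOn f₀ f (Icc lo hi) :=
  ⟨IccExtend hlohi ((Icc lo hi).domRestrict f), hf.domRestrict.Icc_extend',
    fun _ ht => IccExtend_of_mem hlohi _ ht⟩

section LinearODE

variable {a b l : ℝ → ℝ} {s T : ℝ}

theorem linear_ode_conserved_of_continuous (ha : Continuous a) (hb : Continuous b)
    (hl : ∀ t ∈ Icc s T, HasDerivAt l (-b t - a t * l t) t) :
    ∀ t ∈ Icc s T, l t * Real.exp (∫ v in s..t, a v) +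
      ∫ v in s..t, b v * Real.exp (∫ w in s..v, a w) = l s := by
  set A : ℝ → ℝ := fun t => ∫ v in s..t, a v
  have hA : ∀ t, HasDerivAt A (a t) t := fun t => (ha.integral_hasStrictDerivAt s t).hasDerivAt
  have hbA : Continuous fun v => b v * Real.exp (A v) :=
    hb.mul (Real.continuous_exp.comp (continuous_iff_continuousAt.2 fun t => (hA t).continuousAt))
  have hzero : ∀ t ∈ Icc s T,
      HasDerivAt (fun t => l t * Real.exp (A t) + ∫ v in s..t, b v * Real.exp (A v)) 0 t :=
    fun t ht => (((hl t ht).mul (hA t).exp).add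
      (hbA.integral_hasStrictDerivAt s t).hasDerivAt).congr_deriv (by ring)
  intro t ht
  simpa [A] using constant_of_has_deriv_right_zero
    (fun t ht => (hzero t ht).continuousAt.continuousWithinAt)
    (fun t ht => (hzero t (Ico_subset_Icc_self ht)).hasDerivWithinAt) t ht

theorem linear_ode_conserved (ha : ContinuousOn a (Icc s T)) (hb : ContinuousOn b (Icc s T))
    (hl : ∀ t ∈ Icc s T, HasDerivAt l (-b t - a t * l t) t) :
    ∀ t ∈ Icc s T, l t * Real.exp (∫ v in s..t, a v) +
      ∫ v in s..t, b v * Real.exp (∫ w in s..v, a w) = l s := by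
  intro t ht
  -- Only the values of `a` and `b` on `[s, t]` enter, so continuous extensions to `ℝ` may be used.
  have hsT : s ≤ T := ht.1.trans ht.2
  obtain ⟨a₀, ha₀, haa₀⟩ := ha.exists_continuous_eqOn_Icc hsT
  obtain ⟨b₀, hb₀, hbb₀⟩ := hb.exists_continuous_eqOn_Icc hsT
  have hsub : ∀ {t}, t ∈ Icc s T → uIcc s t ⊆ Icc s T := fun ht => by
    rw [uIcc_of_le ht.1]; exact Icc_subset_Icc_right ht.2
  have hA : ∀ {t}, t ∈ Icc s T → ∫ v in s..t, a₀ v = ∫ v in s..t, a v := fun ht =>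
    intervalIntegral.integral_congr fun v hv => haa₀ (hsub ht hv)
  have key := linear_ode_conserved_of_continuous ha₀ hb₀
    (fun t ht => by rw [haa₀ ht, hbb₀ ht]; exact hl t ht) t ht
  have hbA : ∫ v in s..t, b₀ v * Real.exp (∫ w in s..v, a₀ w) =
      ∫ v in s..t, b v * Real.exp (∫ w in s..v, a w) :=
    intervalIntegral.integral_congr fun v hv => by rw [hbb₀ (hsub ht hv), hA (hsub ht hv)]
  rwa [hA ht, hbA] at key

end LinearODE

theorem coordination_interior_case_general
    (T hmin hmax : ℝ)
    (F : ℝ → ℝ → ℝ → ℝ) (g : ℝ → ℝ → ℝ)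
    (xstar ustar : ℝ → ℝ)
    (a b p : ℝ → ℝ)
    (hpFu : ∀ t ∈ Set.Icc (0:ℝ) T, HasDerivAt (fun u => F t (xstar t) u) (p t) (ustar t))
    (haC : ContinuousOn a (Set.Icc 0 T))
    (hbC : ContinuousOn b (Set.Icc 0 T))
    (A 𝔽 : ℝ → ℝ)
    (hA : ∀ t, A t = ∫ v in (0:ℝ)..t, a v)
    (h𝔽 : ∀ t, 𝔽 t = p t * Real.exp (A t) + ∫ v in (0:ℝ)..t, b v * Real.exp (A v))
    (l : ℝ → ℝ)
    (hld : ∀ t ∈ Set.Icc (0:ℝ) T, HasDerivAt l (-b t - a t * l t) t)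
    (K : ℝ) (hK : l 0 = K)
    (t₀ : ℝ) (ht₀ : t₀ ∈ Set.Icc (0:ℝ) T)
    (hint : hmin < ustar t₀ ∧ ustar t₀ < hmax)
    (hmaxH : ∀ u ∈ Set.Icc hmin hmax,
      F t₀ (xstar t₀) u + l t₀ * (g t₀ (xstar t₀) - u) ≤
        F t₀ (xstar t₀) (ustar t₀) + l t₀ * (g t₀ (xstar t₀) - ustar t₀)) :
    𝔽 t₀ = K := by
  have hpl : p t₀ = l t₀ := (hpFu t₀ ht₀).eq_of_isMaxOn_Icc_add_mul_sub hint hmaxH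
  simp only [h𝔽, hA, hpl, ← hK]
  exact linear_ode_conserved haC hbC hld t₀ ht₀

/-- Case 1 (interior control) in the proof of Theorem 1: interior
Hamiltonian maximization at `t₀` yields the coordination equation `𝔽(t₀) = K`. -/
theorem coordination_interior_case
    (T hmin hmax : ℝ) (hT : 0 < T) (hlt : hmin < hmax)
    (F : ℝ → ℝ → ℝ → ℝ) (g : ℝ → ℝ → ℝ)
    (hF : ContDiff ℝ 1 (fun q : ℝ × ℝ × ℝ => F q.1 q.2.1 q.2.2))
    (hg : ContDiff ℝ 1 (fun q : ℝ × ℝ => g q.1 q.2))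
    (xstar ustar : ℝ → ℝ) (hx : Continuous xstar)
    (hu : ∀ t ∈ Set.Icc (0:ℝ) T, ustar t ∈ Set.Icc hmin hmax)
    (a b p : ℝ → ℝ)
    (hagx : ∀ t ∈ Set.Icc (0:ℝ) T, HasDerivAt (fun x => g t x) (a t) (xstar t))
    (hbFx : ∀ t ∈ Set.Icc (0:ℝ) T, HasDerivAt (fun x => F t x (ustar t)) (b t) (xstar t))
    (hpFu : ∀ t ∈ Set.Icc (0:ℝ) T, HasDerivAt (fun u => F t (xstar t) u) (p t) (ustar t))
    (haC : ContinuousOn a (Set.Icc 0 T))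
    (hbC : ContinuousOn b (Set.Icc 0 T))
    (hpC : ContinuousOn p (Set.Icc 0 T))
    (A 𝔽 : ℝ → ℝ)
    (hA : ∀ t, A t = ∫ v in (0:ℝ)..t, a v)
    (h𝔽 : ∀ t, 𝔽 t = p t * Real.exp (A t) + ∫ v in (0:ℝ)..t, b v * Real.exp (A v))
    (l : ℝ → ℝ)
    (hld : ∀ t ∈ Set.Icc (0:ℝ) T, HasDerivAt l (-b t - a t * l t) t)
    (K : ℝ) (hK : l 0 = K)
    (t₀ : ℝ) (ht₀ : t₀ ∈ Set.Icc (0:ℝ) T)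
    (hint : hmin < ustar t₀ ∧ ustar t₀ < hmax)
    (hmaxH : ∀ u ∈ Set.Icc hmin hmax,
      F t₀ (xstar t₀) u + l t₀ * (g t₀ (xstar t₀) - u) ≤
        F t₀ (xstar t₀) (ustar t₀) + l t₀ * (g t₀ (xstar t₀) - ustar t₀)) :
    𝔽 t₀ = K :=
  coordination_interior_case_general T hmin hmax F g xstar ustar a b p hpFu haC hbC A 𝔽 hA h𝔽 l hld
    K hK t₀ ht₀ hint hmaxH
end

section
/- Under the setup of Theorem 1 (T > 0; hmin < hmax; F, g continuously differentiable; x* continuous; a(t) = ∂g/∂x(t, x*(t)), b(t) = ∂F/∂x(t, x*(t), u*(t)) and t ↦ ∂F/∂u(t, x*(t), u*(t)) continuous on [0, T]; coordination function 𝔽(t) = ∂F/∂u(t, x*(t), u*(t))·exp(A(t)) + ∫₀ᵗ b(v)·exp(A(v)) dv with A(t) = ∫₀ᵗ a(v) dv; costate λ differentiable with λ'(t) = −b(t) − a(t)·λ(t) on [0, T] and λ(0) = K): if at some t₀ ∈ [0, T] one has u*(t₀) = hmin and hmin maximizes u ↦ F(t₀, x*(t₀), u) + λ(t₀)·(g(t₀,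 x*(t₀)) − u) over [hmin, hmax], then 𝔽(t₀) ≤ K. -/
/-!
Maximality of the Hamiltonian at the left endpoint `hmin` gives the first-order condition
`∂F/∂u(t₀) ≤ λ(t₀)`. With the integrating factor `exp A`, the costate equation says that
`λ(t) exp A(t) + ∫₀ᵗ b exp A` is constant, equal to `λ(0) = K`; multiplying the first-order
condition by `exp A(t₀) > 0` and adding the integral gives `𝔽(t₀) ≤ K`.
-/

open Set Real

theorem hasDerivWithinAt_nonpos_of_isMaxOn_Icc_left {f : ℝ → ℝ} {f' lo hi : ℝ} (hlt : lo < hi)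
    (hf : HasDerivWithinAt f f' (Icc lo hi) lo) (hmax : IsMaxOn f (Icc lo hi) lo) : f' ≤ 0 := by
  have hdir : hi - lo ∈ posTangentConeAt (Icc lo hi) lo :=
    sub_mem_posTangentConeAt_of_segment_subset (segment_eq_Icc hlt.le).subset
  have h := hmax.localize.hasFDerivWithinAt_nonpos hf.hasFDerivWithinAt hdir
  simp only [ContinuousLinearMap.toSpanSingleton_apply, smul_eq_mul] at h
  nlinarith

theorem hasDerivAt_integral_of_continuousOn_Icc {f : ℝ → ℝ} {s T x : ℝ}
    (hf : ContinuousOn f (Icc s T)) (hx : x ∈ Ioo s T) :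
    HasDerivAt (fun t => ∫ v in s..t, f v) (f x) x := by
  have hcont : ContinuousOn f (Ioo s T) := hf.mono Ioo_subset_Icc_self
  refine intervalIntegral.integral_hasDerivAt_right ?_
    (hcont.stronglyMeasurableAtFilter isOpen_Ioo x hx) (hcont.continuousAt (isOpen_Ioo.mem_nhds hx))
  exact (hf.mono (Icc_subset_Icc le_rfl hx.2.le)).intervalIntegrable_of_Icc hx.1.le

theorem continuousOn_integral_Icc {f : ℝ → ℝ} {s T : ℝ} (hf : ContinuousOn f (Icc s T)) :
    ContinuousOn (fun t => ∫ v in s..t, f v) (Icc s T) := by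
  rcases le_or_gt s T with hsT | hTs
  · have := intervalIntegral.continuousOn_primitive_interval (μ := MeasureTheory.volume)
      (a := s) (b := T) (f := f) (by rw [uIcc_of_le hsT]; exact hf.integrableOn_Icc)
    rwa [uIcc_of_le hsT] at this
  · simp [Icc_eq_empty_of_lt hTs]

theorem mul_exp_integral_add_integral_eq {a b l : ℝ → ℝ} {s T t : ℝ}
    (ha : ContinuousOn a (Icc s T)) (hb : ContinuousOn b (Icc s T))
    (hl : ∀ t ∈ Icc s T, HasDerivAt l (-b t - a t * l t) t) (ht : t ∈ Icc s T) :
    l t * exp (∫ v in s..t, a v) + ∫ v in s..t, b v * exp (∫ w in s..v, a w) = l s := by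
  set A : ℝ → ℝ := fun t => ∫ v in s..t, a v with hA
  have hsub : Icc s t ⊆ Icc s T := Icc_subset_Icc le_rfl ht.2
  have hexpA : ContinuousOn (fun v => exp (A v)) (Icc s T) :=
    continuous_exp.comp_continuousOn (continuousOn_integral_Icc ha)
  have hderiv : ∀ x ∈ Ioo s t, HasDerivAt (fun v => l v * exp (A v)) (-(b x * exp (A x))) x := by
    intro x hx
    have hxT : x ∈ Ioo s T := ⟨hx.1, hx.2.trans_le ht.2⟩
    exact ((hl x (Ioo_subset_Icc_self hxT)).mul
      (hasDerivAt_integral_of_continuousOn_Icc ha hxT).exp).congr_deriv (by ring)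
  have hcont : ContinuousOn (fun v => l v * exp (A v)) (Icc s t) :=
    ((continuousOn_of_forall_continuousAt fun x hx => (hl x hx).continuousAt).mul hexpA).mono hsub
  have hftc := intervalIntegral.integral_eq_sub_of_hasDerivAt_of_le ht.1 hcont
    hderiv ((hb.mul hexpA).mono hsub |>.neg.intervalIntegrable_of_Icc ht.1)
  simp only [intervalIntegral.integral_neg, hA, intervalIntegral.integral_same, exp_zero,
    mul_one] at hftc
  linarith

theorem coordination_lower_bound_case_general
    (T hmin hmax : ℝ) (hlt : hmin < hmax)
    (F : ℝ → ℝ → ℝ → ℝ) (g : ℝ → ℝ → ℝ)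
    (xstar ustar : ℝ → ℝ)
    (a b p : ℝ → ℝ)
    (hpFu : ∀ t ∈ Set.Icc (0:ℝ) T, HasDerivAt (fun u => F t (xstar t) u) (p t) (ustar t))
    (haC : ContinuousOn a (Set.Icc 0 T))
    (hbC : ContinuousOn b (Set.Icc 0 T))
    (A 𝔽 : ℝ → ℝ)
    (hA : ∀ t, A t = ∫ v in (0:ℝ)..t, a v)
    (h𝔽 : ∀ t, 𝔽 t = p t * Real.exp (A t) + ∫ v in (0:ℝ)..t, b v * Real.exp (A v))
    (l : ℝ → ℝ)
    (hld : ∀ t ∈ Set.Icc (0:ℝ) T, HasDerivAt l (-b t - a t * l t) t)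
    (K : ℝ) (hK : l 0 = K)
    (t₀ : ℝ) (ht₀ : t₀ ∈ Set.Icc (0:ℝ) T)
    (hlb : ustar t₀ = hmin)
    (hmaxH : ∀ u ∈ Set.Icc hmin hmax,
      F t₀ (xstar t₀) u + l t₀ * (g t₀ (xstar t₀) - u) ≤
        F t₀ (xstar t₀) (ustar t₀) + l t₀ * (g t₀ (xstar t₀) - ustar t₀)) :
    𝔽 t₀ ≤ K := by
  obtain rfl : A = fun t => ∫ v in (0:ℝ)..t, a v := funext hA
  have hHu : HasDerivAt (fun u => F t₀ (xstar t₀) u + l t₀ * (g t₀ (xstar t₀) - u))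
      (p t₀ - l t₀) hmin := by
    rw [← hlb]
    exact ((hpFu t₀ ht₀).add (((hasDerivAt_const _ _).sub (hasDerivAt_id _)).const_mul _))
      |>.congr_deriv (by ring)
  have hp_le_l : p t₀ ≤ l t₀ := by
    have := hasDerivWithinAt_nonpos_of_isMaxOn_Icc_left hlt hHu.hasDerivWithinAt
      (fun u hu => by simpa [hlb] using hmaxH u hu)
    linarith
  have hcostate := mul_exp_integral_add_integral_eq haC hbC hld ht₀
  rw [h𝔽, ← hK, ← hcostate]
  gcongr

/-- Case 2 (control at the lower bound) in the proof of Theorem 1: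
Hamiltonian maximization at `u*(t₀) = hmin` yields `𝔽(t₀) ≤ K`. -/
theorem coordination_lower_bound_case
    (T hmin hmax : ℝ) (hT : 0 < T) (hlt : hmin < hmax)
    (F : ℝ → ℝ → ℝ → ℝ) (g : ℝ → ℝ → ℝ)
    (hF : ContDiff ℝ 1 (fun q : ℝ × ℝ × ℝ => F q.1 q.2.1 q.2.2))
    (hg : ContDiff ℝ 1 (fun q : ℝ × ℝ => g q.1 q.2))
    (xstar ustar : ℝ → ℝ) (hx : Continuous xstar)
    (hu : ∀ t ∈ Set.Icc (0:ℝ) T, ustar t ∈ Set.Icc hmin hmax)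
    (a b p : ℝ → ℝ)
    (hagx : ∀ t ∈ Set.Icc (0:ℝ) T, HasDerivAt (fun x => g t x) (a t) (xstar t))
    (hbFx : ∀ t ∈ Set.Icc (0:ℝ) T, HasDerivAt (fun x => F t x (ustar t)) (b t) (xstar t))
    (hpFu : ∀ t ∈ Set.Icc (0:ℝ) T, HasDerivAt (fun u => F t (xstar t) u) (p t) (ustar t))
    (haC : ContinuousOn a (Set.Icc 0 T))
    (hbC : ContinuousOn b (Set.Icc 0 T))
    (hpC : ContinuousOn p (Set.Icc 0 T))
    (A 𝔽 : ℝ → ℝ)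
    (hA : ∀ t, A t = ∫ v in (0:ℝ)..t, a v)
    (h𝔽 : ∀ t, 𝔽 t = p t * Real.exp (A t) + ∫ v in (0:ℝ)..t, b v * Real.exp (A v))
    (l : ℝ → ℝ)
    (hld : ∀ t ∈ Set.Icc (0:ℝ) T, HasDerivAt l (-b t - a t * l t) t)
    (K : ℝ) (hK : l 0 = K)
    (t₀ : ℝ) (ht₀ : t₀ ∈ Set.Icc (0:ℝ) T)
    (hlb : ustar t₀ = hmin)
    (hmaxH : ∀ u ∈ Set.Icc hmin hmax,
      F t₀ (xstar t₀) u + l t₀ * (g t₀ (xstar t₀) - u) ≤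
        F t₀ (xstar t₀) (ustar t₀) + l t₀ * (g t₀ (xstar t₀) - ustar t₀)) :
    𝔽 t₀ ≤ K :=
  coordination_lower_bound_case_general T hmin hmax hlt F g xstar ustar a b p hpFu haC hbC A 𝔽 hA h𝔽
    l hld K hK t₀ ht₀ hlb hmaxH
end
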